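/- arXiv:2206.06009 — 2 statements merged into one kernel-verified Lean document; each statement's English description precedes it below -/
import Mathlib

section
/- (Policy improvement identity / performance difference lemma) For any finite MDP with kernel P and any two policies π, π', J(P,π) - J(P,π') = E_{τ∼P,π}[ Σ_{t=0}^∞ γ^t A^{P,π'}(s_t,a_t) ], where the trajectory τ is generated by π under P, and A^{P,π'}(s,a) = Q^{P,π'}(s,a) - V^{P,π'}(s). -/
open scoped BigOperators

variable {S A : Type*}

/-- `P` is a transition kernel: for each state-action pair, a probability
distribution over next states. -/
def IsKernel [Fintype S] (P : S → A → S → ℝ) : Prop :=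
  ∀ s a, (∀ s', 0 ≤ P s a s') ∧ ∑ s', P s a s' = 1

/-- `π` is a stochastic policy: for each state, a probability distribution over actions. -/
def IsPolicy [Fintype A] (π : S → A → ℝ) : Prop :=
  ∀ s, (∀ a, 0 ≤ π s a) ∧ ∑ a, π s a = 1

/-- `ρ` is a probability distribution over states. -/
def IsDist [Fintype S] (ρ : S → ℝ) : Prop :=
  (∀ s, 0 ≤ ρ s) ∧ ∑ s, ρ s = 1

/-- One step of the state-marginal evolution under kernel `P` and policy `π`. -/
noncomputable def stepMarginal [Fintype S] [Fintype A]
    (P : S → A → S → ℝ) (π : S → A → ℝ) (μ : S → ℝ) : S → ℝ :=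
  fun s' => ∑ s, μ s * ∑ a, π s a * P s a s'

/-- The time-`t` state marginal under kernel `P`, policy `π`, initial distribution `ρ`. -/
noncomputable def marginal [Fintype S] [Fintype A]
    (P : S → A → S → ℝ) (π : S → A → ℝ) (ρ : S → ℝ) : ℕ → S → ℝ
  | 0 => ρ
  | t + 1 => stepMarginal P π (marginal P π ρ t)

/-- Expected one-step reward when the current state is distributed according to `μ`. -/
noncomputable def expReward [Fintype S] [Fintype A]
    (P : S → A → S → ℝ) (π : S → A → ℝ) (r : S → A → S → ℝ) (μ : S → ℝ) : ℝ :=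
  ∑ s, μ s * ∑ a, π s a * ∑ s', P s a s' * r s a s'

/-- The expected discounted return `J(P, π)` with initial distribution `ρ`. -/
noncomputable def Jret [Fintype S] [Fintype A]
    (P : S → A → S → ℝ) (π : S → A → ℝ) (r : S → A → S → ℝ) (γ : ℝ) (ρ : S → ℝ) : ℝ :=
  ∑' t : ℕ, γ ^ t * expReward P π r (marginal P π ρ t)

/-- The value function `V^{P,π}(s)`: the return starting from state `s`. -/
noncomputable def Vval [Fintype S] [Fintype A] [DecidableEq S]
    (P : S → A → S → ℝ) (π : S → A → ℝ) (r : S → A → S → ℝ) (γ : ℝ) (s : S) : ℝ :=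
  Jret P π r γ (fun s' => if s' = s then 1 else 0)

/-- The state-action value function `Q^{P,π}(s,a)`. -/
noncomputable def Qval [Fintype S] [Fintype A] [DecidableEq S]
    (P : S → A → S → ℝ) (π : S → A → ℝ) (r : S → A → S → ℝ) (γ : ℝ) (s : S) (a : A) : ℝ :=
  ∑ s', P s a s' * (r s a s' + γ * Vval P π r γ s')

/-- The advantage function `A^{P,π}(s,a) = Q^{P,π}(s,a) - V^{P,π}(s)`. -/
noncomputable def Aval [Fintype S] [Fintype A] [DecidableEq S]
    (P : S → A → S → ℝ) (π : S → A → ℝ) (r : S → A → S → ℝ) (γ : ℝ) (s : S) (a : A) : ℝ :=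
  Qval P π r γ s a - Vval P π r γ s

/-! ### Auxiliary lemmas -/

lemma abs_weighted_le {ι : Type*} [Fintype ι] {w v : ι → ℝ} {C : ℝ}
    (hw : ∀ i, 0 ≤ w i) (hw1 : ∑ i, w i = 1) (hv : ∀ i, |v i| ≤ C) :
    |∑ i, w i * v i| ≤ C := by
  calc |∑ i, w i * v i| ≤ ∑ i, |w i * v i| := Finset.abs_sum_le_sum_abs _ _
    _ ≤ ∑ i, w i * C := by
        refine Finset.sum_le_sum fun i _ => ?_
        rw [abs_mul, abs_of_nonneg (hw i)]
        exact mul_le_mul_of_nonneg_left (hv i) (hw i)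
    _ = C := by rw [← Finset.sum_mul, hw1, one_mul]

lemma isDist_step [Fintype S] [Fintype A] {P : S → A → S → ℝ} {π : S → A → ℝ} {μ : S → ℝ}
    (hP : IsKernel P) (hπ : IsPolicy π) (hμ : IsDist μ) : IsDist (stepMarginal P π μ) := by
  constructor
  · intro s'
    refine Finset.sum_nonneg fun s _ => mul_nonneg (hμ.1 s) ?_
    exact Finset.sum_nonneg fun a _ => mul_nonneg ((hπ s).1 a) ((hP s a).1 s')
  · unfold stepMarginal
    rw [Finset.sum_comm]
    have h : ∀ s, ∑ s', μ s * ∑ a, π s a * P s a s' = μ s := by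
      intro s
      rw [← Finset.mul_sum, Finset.sum_comm]
      have h1 : ∀ a, ∑ s', P s a s' = 1 := fun a => (hP s a).2
      simp_rw [← Finset.mul_sum, h1, mul_one, (hπ s).2, mul_one]
    simp_rw [h, hμ.2]

lemma isDist_marginal [Fintype S] [Fintype A] {P : S → A → S → ℝ} {π : S → A → ℝ} {ρ : S → ℝ}
    (hP : IsKernel P) (hπ : IsPolicy π) (hρ : IsDist ρ) (t : ℕ) :
    IsDist (marginal P π ρ t) := by
  induction t with
  | zero => exact hρ
  | succ t ih => exact isDist_step hP hπ ih

lemma isDist_delta [Fintype S] [DecidableEq S] (s : S) :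
    IsDist (fun s' => if s' = s then 1 else 0) := by
  constructor
  · intro s'; dsimp only; split <;> norm_num
  · simp

lemma abs_expReward_le [Fintype S] [Fintype A]
    {P : S → A → S → ℝ} {π : S → A → ℝ} {r : S → A → S → ℝ} {μ : S → ℝ} {rmax : ℝ}
    (hP : IsKernel P) (hπ : IsPolicy π) (hμ : IsDist μ)
    (hr : ∀ s a s', |r s a s'| ≤ rmax) :
    |expReward P π r μ| ≤ rmax := by
  refine abs_weighted_le hμ.1 hμ.2 fun s => ?_
  refine abs_weighted_le (hπ s).1 (hπ s).2 fun a => ?_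
  exact abs_weighted_le (hP s a).1 (hP s a).2 fun s' => hr s a s'

lemma summable_geo_bound {f : ℕ → ℝ} {C γ : ℝ} (hγ0 : 0 ≤ γ) (hγ1 : γ < 1)
    (hf : ∀ t, |f t| ≤ C) : Summable (fun t => γ ^ t * f t) := by
  apply Summable.of_abs
  refine Summable.of_nonneg_of_le (fun t => abs_nonneg _) (fun t => ?_)
    ((summable_geometric_of_lt_one hγ0 hγ1).mul_right C)
  rw [abs_mul, abs_pow, abs_of_nonneg hγ0]
  exact mul_le_mul_of_nonneg_left (hf t) (pow_nonneg hγ0 t)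

lemma summable_J [Fintype S] [Fintype A]
    {P : S → A → S → ℝ} {π : S → A → ℝ} {r : S → A → S → ℝ} {γ : ℝ} {ρ : S → ℝ} {rmax : ℝ}
    (hP : IsKernel P) (hπ : IsPolicy π) (hρ : IsDist ρ)
    (hγ0 : 0 ≤ γ) (hγ1 : γ < 1) (hr : ∀ s a s', |r s a s'| ≤ rmax) :
    Summable (fun t => γ ^ t * expReward P π r (marginal P π ρ t)) :=
  summable_geo_bound hγ0 hγ1 fun t =>
    abs_expReward_le hP hπ (isDist_marginal hP hπ hρ t) hr

lemma marginal_eq_sum_delta [Fintype S] [Fintype A] [DecidableEq S]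
    (P : S → A → S → ℝ) (π : S → A → ℝ) (ρ : S → ℝ) (t : ℕ) (u : S) :
    marginal P π ρ t u
      = ∑ s, ρ s * marginal P π (fun s' => if s' = s then 1 else 0) t u := by
  induction t generalizing u with
  | zero =>
      simp only [marginal, mul_ite, mul_one, mul_zero]
      rw [Finset.sum_ite_eq Finset.univ u ρ]
      simp
  | succ t ih =>
      simp only [marginal, stepMarginal]
      simp_rw [ih, Finset.sum_mul]
      rw [Finset.sum_comm]
      simp_rw [mul_assoc, ← Finset.mul_sum]

lemma expReward_sum [Fintype S] [Fintype A] {ι : Type*} [Fintype ι]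
    (P : S → A → S → ℝ) (π : S → A → ℝ) (r : S → A → S → ℝ)
    (c : ι → ℝ) (m : ι → S → ℝ) :
    expReward P π r (fun u => ∑ i, c i * m i u) = ∑ i, c i * expReward P π r (m i) := by
  unfold expReward
  simp_rw [Finset.sum_mul]
  rw [Finset.sum_comm]
  simp_rw [mul_assoc, ← Finset.mul_sum]

lemma Jret_eq_sum_V [Fintype S] [Fintype A] [DecidableEq S]
    {P : S → A → S → ℝ} {π : S → A → ℝ} {r : S → A → S → ℝ} {γ : ℝ} {ρ : S → ℝ} {rmax : ℝ}
    (hP : IsKernel P) (hπ : IsPolicy π)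
    (hγ0 : 0 ≤ γ) (hγ1 : γ < 1) (hr : ∀ s a s', |r s a s'| ≤ rmax) :
    Jret P π r γ ρ = ∑ s, ρ s * Vval P π r γ s := by
  have hpt : ∀ t : ℕ, γ ^ t * expReward P π r (marginal P π ρ t)
      = ∑ s, ρ s * (γ ^ t * expReward P π r
          (marginal P π (fun s' => if s' = s then 1 else 0) t)) := by
    intro t
    have hm : marginal P π ρ t
        = fun u => ∑ s, ρ s * marginal P π (fun s' => if s' = s then 1 else 0) t u :=
      funext (marginal_eq_sum_delta P π ρ t)
    rw [hm, expReward_sum, Finset.mul_sum]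
    exact Finset.sum_congr rfl fun s _ => by ring
  calc Jret P π r γ ρ
      = ∑' t : ℕ, ∑ s, ρ s * (γ ^ t * expReward P π r
          (marginal P π (fun s' => if s' = s then 1 else 0) t)) := tsum_congr hpt
    _ = ∑ s, ∑' t : ℕ, ρ s * (γ ^ t * expReward P π r
          (marginal P π (fun s' => if s' = s then 1 else 0) t)) :=
        Summable.tsum_finsetSum fun s _ => (summable_J hP hπ (isDist_delta s) hγ0 hγ1 hr).mul_left (ρ s)
    _ = ∑ s, ρ s * Vval P π r γ s := by
        refine Finset.sum_congr rfl fun s _ => ?_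
        rw [tsum_mul_left]
        rfl

lemma abs_Vval_le [Fintype S] [Fintype A] [DecidableEq S]
    {P : S → A → S → ℝ} {π : S → A → ℝ} {r : S → A → S → ℝ} {γ : ℝ} {rmax : ℝ}
    (hP : IsKernel P) (hπ : IsPolicy π)
    (hγ0 : 0 ≤ γ) (hγ1 : γ < 1) (hr : ∀ s a s', |r s a s'| ≤ rmax) (s : S) :
    |Vval P π r γ s| ≤ (1 - γ)⁻¹ * rmax := by
  have hsum : Summable (fun t : ℕ => γ ^ t * expReward P π r
      (marginal P π (fun s' => if s' = s then 1 else 0) t)) :=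
    summable_J hP hπ (isDist_delta s) hγ0 hγ1 hr
  have habs : ∀ t : ℕ, |γ ^ t * expReward P π r
      (marginal P π (fun s' => if s' = s then 1 else 0) t)| ≤ γ ^ t * rmax := by
    intro t
    rw [abs_mul, abs_pow, abs_of_nonneg hγ0]
    exact mul_le_mul_of_nonneg_left
      (abs_expReward_le hP hπ (isDist_marginal hP hπ (isDist_delta s) t) hr)
      (pow_nonneg hγ0 t)
  have hgeo : Summable (fun t : ℕ => γ ^ t * rmax) :=
    (summable_geometric_of_lt_one hγ0 hγ1).mul_right rmax
  have h1 : |Vval P π r γ s| ≤ ∑' t : ℕ, |γ ^ t * expReward P π r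
      (marginal P π (fun s' => if s' = s then 1 else 0) t)| := by
    have hnorm : Summable (fun t : ℕ => ‖γ ^ t * expReward P π r
        (marginal P π (fun s' => if s' = s then 1 else 0) t)‖) := by
      simp only [Real.norm_eq_abs]
      exact hsum.abs
    have h2 := norm_tsum_le_tsum_norm hnorm
    simp only [Real.norm_eq_abs] at h2
    exact h2
  calc |Vval P π r γ s|
      ≤ ∑' t : ℕ, |γ ^ t * expReward P π r
          (marginal P π (fun s' => if s' = s then 1 else 0) t)| := h1
    _ ≤ ∑' t : ℕ, γ ^ t * rmax := Summable.tsum_le_tsum habs hsum.abs hgeo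
    _ = (1 - γ)⁻¹ * rmax := by
        rw [tsum_mul_right, tsum_geometric_of_lt_one hγ0 hγ1, mul_comm]

lemma sum_swap3 {S A : Type*} [Fintype S] [Fintype A] (W : S → A → S → ℝ) :
    ∑ s, ∑ a, ∑ s', W s a s' = ∑ s', ∑ s, ∑ a, W s a s' := by
  have h1 : ∀ s, ∑ a, ∑ s', W s a s' = ∑ s', ∑ a, W s a s' :=
    fun s => Finset.sum_comm
  simp_rw [h1]
  exact Finset.sum_comm

set_option maxHeartbeats 1600000 in
/-- performance difference lemma:
`J(P,π) - J(P,π') = E_{τ∼P,π}[Σ_t γ^t A^{P,π'}(s_t,a_t)]`. -/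
theorem performance_difference [Fintype S] [Fintype A] [DecidableEq S]
    (P : S → A → S → ℝ) (π π' : S → A → ℝ) (r : S → A → S → ℝ) (γ : ℝ) (ρ : S → ℝ)
    (rmax : ℝ)
    (hP : IsKernel P) (hπ : IsPolicy π) (hπ' : IsPolicy π') (hρ : IsDist ρ)
    (hγ0 : 0 ≤ γ) (hγ1 : γ < 1)
    (hr : ∀ s a s', |r s a s'| ≤ rmax) :
    Jret P π r γ ρ - Jret P π' r γ ρ =
      ∑' t : ℕ, γ ^ t * ∑ s, marginal P π ρ t s * ∑ a, π s a * Aval P π' r γ s a := by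
  set V : S → ℝ := Vval P π' r γ with hVdef
  set D : ℕ → S → ℝ := marginal P π ρ with hDdef
  set e : ℕ → ℝ := fun t => expReward P π r (D t) with hedef
  set g : ℕ → ℝ := fun t => ∑ s, D t s * V s with hgdef
  have hDt : ∀ t, IsDist (D t) := fun t => isDist_marginal hP hπ hρ t
  -- the key pointwise identity
  have hπA : ∀ s, ∑ a, π s a * Aval P π' r γ s a
      = (∑ a, π s a * ∑ s', P s a s' * r s a s')
        + γ * (∑ a, π s a * ∑ s', P s a s' * V s') - V s := by
    intro s
    have h1 : ∑ a, π s a * Aval P π' r γ s a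
        = (∑ a, π s a * Qval P π' r γ s a) - V s := by
      simp only [Aval, mul_sub]
      rw [Finset.sum_sub_distrib, ← Finset.sum_mul, (hπ s).2, one_mul]
    rw [h1]
    congr 1
    have hQ : ∀ a, Qval P π' r γ s a
        = (∑ s', P s a s' * r s a s') + γ * ∑ s', P s a s' * V s' := by
      intro a
      simp only [Qval, mul_add, Finset.sum_add_distrib]
      congr 1
      rw [Finset.mul_sum]
      exact Finset.sum_congr rfl fun s' _ => by ring
    simp_rw [hQ, mul_add, Finset.sum_add_distrib]
    congr 1
    rw [Finset.mul_sum]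
    exact Finset.sum_congr rfl fun a _ => by ring
  have key : ∀ t, (∑ s, D t s * ∑ a, π s a * Aval P π' r γ s a)
      = e t + γ * g (t + 1) - g t := by
    intro t
    have hstep : ∑ s, D t s * (γ * ∑ a, π s a * ∑ s', P s a s' * V s')
        = γ * g (t + 1) := by
      have e1 : ∀ s, D t s * (γ * ∑ a, π s a * ∑ s', P s a s' * V s')
          = γ * ∑ a, ∑ s', D t s * (π s a * (P s a s' * V s')) := by
        intro s
        rw [mul_left_comm]
        congr 1
        rw [Finset.mul_sum]
        refine Finset.sum_congr rfl fun a _ => ?_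
        rw [Finset.mul_sum, Finset.mul_sum]
      simp_rw [e1]
      rw [← Finset.mul_sum]
      congr 1
      rw [sum_swap3 (fun s a s' => D t s * (π s a * (P s a s' * V s')))]
      have hg1 : g (t + 1) = ∑ s', (∑ s, D t s * ∑ a, π s a * P s a s') * V s' := rfl
      rw [hg1]
      refine Finset.sum_congr rfl fun s' _ => ?_
      rw [Finset.sum_mul]
      refine Finset.sum_congr rfl fun s _ => ?_
      rw [Finset.mul_sum, Finset.sum_mul]
      exact Finset.sum_congr rfl fun a _ => by ring
    calc ∑ s, D t s * ∑ a, π s a * Aval P π' r γ s a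
        = ∑ s, (D t s * ∑ a, π s a * ∑ s', P s a s' * r s a s'
            + D t s * (γ * ∑ a, π s a * ∑ s', P s a s' * V s')
            - D t s * V s) := by
          refine Finset.sum_congr rfl fun s _ => ?_
          rw [hπA s]; ring
      _ = e t + γ * g (t + 1) - g t := by
          rw [Finset.sum_sub_distrib, Finset.sum_add_distrib, hstep]
          rfl
  -- summability facts
  have hVb : ∀ s, |V s| ≤ (1 - γ)⁻¹ * rmax := fun s => abs_Vval_le hP hπ' hγ0 hγ1 hr s
  have hgb : ∀ t, |g t| ≤ (1 - γ)⁻¹ * rmax := fun t =>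
    abs_weighted_le (hDt t).1 (hDt t).2 hVb
  have hsum_e : Summable (fun t => γ ^ t * e t) := summable_J hP hπ hρ hγ0 hγ1 hr
  have hsum_g : Summable (fun t => γ ^ t * g t) := summable_geo_bound hγ0 hγ1 hgb
  have hsum_g1 : Summable (fun t => γ ^ (t + 1) * g (t + 1)) :=
    (summable_nat_add_iff 1).2 hsum_g
  have hpt : ∀ t : ℕ, γ ^ t * ∑ s, D t s * ∑ a, π s a * Aval P π' r γ s a
      = γ ^ t * e t + (γ ^ (t + 1) * g (t + 1) - γ ^ t * g t) := by
    intro t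
    rw [key t]
    ring
  calc Jret P π r γ ρ - Jret P π' r γ ρ
      = (∑' t, γ ^ t * e t) - g 0 := by
        congr 1
        rw [Jret_eq_sum_V hP hπ' hγ0 hγ1 hr]
        rfl
    _ = (∑' t, γ ^ t * e t)
          + ((∑' t, γ ^ (t + 1) * g (t + 1)) - ∑' t, γ ^ t * g t) := by
        have h0 : ∑' t, γ ^ t * g t = γ ^ 0 * g 0 + ∑' t, γ ^ (t + 1) * g (t + 1) :=
          Summable.tsum_eq_zero_add hsum_g
        rw [h0]
        ring
    _ = ∑' t : ℕ, γ ^ t * ∑ s, D t s * ∑ a, π s a * Aval P π' r γ s a := by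
        rw [← Summable.tsum_sub hsum_g1 hsum_g, ← Summable.tsum_add hsum_e (hsum_g1.sub hsum_g)]
        exact tsum_congr fun t => (hpt t).symm
end

section
/- For two kernels P, P' with the same initial distribution and a fixed policy π, the state marginal distributions p^{P',π}_t and p^{P,π}_t at time t satisfy Σ_s |p^{P',π}_t(s) - p^{P,π}_t(s)| ≤ 2 t δ₁, where δ₁ = max_{s,a} D_TV(P'(·|s,a), P(·|s,a)) is the maximum total variation distance between the one-step transition distributions. -/
open scoped BigOperators

variable {S A : Type*}

lemma isDist_marginal_aux [Fintype S] [Fintype A]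
    (P : S → A → S → ℝ) (π : S → A → ℝ) (ρ : S → ℝ)
    (hP : IsKernel P) (hπ : IsPolicy π) (hρ : IsDist ρ) :
    ∀ t, IsDist (marginal P π ρ t) := by
  intro t
  induction t with
  | zero => exact hρ
  | succ t ih =>
    constructor
    · intro s'
      apply Finset.sum_nonneg
      intro s _
      exact mul_nonneg (ih.1 s) (Finset.sum_nonneg fun a _ =>
        mul_nonneg ((hπ s).1 a) ((hP s a).1 s'))
    · show ∑ s', ∑ s, marginal P π ρ t s * ∑ a, π s a * P s a s' = 1
      rw [Finset.sum_comm]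
      calc ∑ s, ∑ s', marginal P π ρ t s * ∑ a, π s a * P s a s'
          = ∑ s, marginal P π ρ t s * ∑ s', ∑ a, π s a * P s a s' := by
            simp_rw [Finset.mul_sum]
        _ = ∑ s, marginal P π ρ t s := by
            apply Finset.sum_congr rfl
            intro s _
            have : ∑ s', ∑ a, π s a * P s a s' = 1 := by
              rw [Finset.sum_comm]
              calc ∑ a, ∑ s', π s a * P s a s'
                  = ∑ a, π s a * ∑ s', P s a s' := by simp_rw [Finset.mul_sum]
                _ = ∑ a, π s a := by
                    apply Finset.sum_congr rfl
                    intro a _; rw [(hP s a).2, mul_one]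
                _ = 1 := (hπ s).2
            rw [this, mul_one]
        _ = 1 := ih.2

/-- the time-`t` state marginals under two kernels differ by at most `2 t δ₁`
in total variation, where `δ₁` bounds the one-step TV distance between the kernels. -/
theorem marginal_diff_kernels [Fintype S] [Fintype A]
    (P P' : S → A → S → ℝ) (π : S → A → ℝ) (ρ : S → ℝ) (δ₁ : ℝ)
    (hP : IsKernel P) (hP' : IsKernel P') (hπ : IsPolicy π) (hρ : IsDist ρ)
    (hδ : ∀ s a, (1 / 2) * ∑ s', |P' s a s' - P s a s'| ≤ δ₁) :
    ∀ t : ℕ, ∑ s, |marginal P' π ρ t s - marginal P π ρ t s| ≤ 2 * (t : ℝ) * δ₁ := by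
  -- S and A are nonempty
  have hSne : Nonempty S := by
    by_contra h
    rw [not_nonempty_iff] at h
    have := hρ.2
    simp [Finset.univ_eq_empty] at this
  obtain ⟨s₀⟩ := hSne
  have hAne : Nonempty A := by
    by_contra h
    rw [not_nonempty_iff] at h
    have := (hπ s₀).2
    simp [Finset.univ_eq_empty] at this
  obtain ⟨a₀⟩ := hAne
  have hδ0 : 0 ≤ δ₁ := by
    refine le_trans ?_ (hδ s₀ a₀)
    positivity
  intro t
  induction t with
  | zero => simp [marginal]
  | succ t ih =>
    have hd := isDist_marginal_aux P π ρ hP hπ hρ t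
    set μ := marginal P π ρ t with hμ
    set μ' := marginal P' π ρ t with hμ'
    have key : ∑ s', |stepMarginal P' π μ' s' - stepMarginal P π μ s'|
        ≤ (∑ s, |μ' s - μ s|) + 2 * δ₁ := by
      have pointwise : ∀ s' : S, |stepMarginal P' π μ' s' - stepMarginal P π μ s'|
          ≤ ∑ s, (|μ' s - μ s| * (∑ a, π s a * P' s a s')
              + μ s * ∑ a, π s a * |P' s a s' - P s a s'|) := by
        intro s'
        have expand : stepMarginal P' π μ' s' - stepMarginal P π μ s'
            = ∑ s, ((μ' s - μ s) * (∑ a, π s a * P' s a s')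
                + μ s * ∑ a, π s a * (P' s a s' - P s a s')) := by
          simp only [stepMarginal, ← Finset.sum_sub_distrib]
          apply Finset.sum_congr rfl
          intro s _
          simp only [mul_sub, sub_mul, Finset.mul_sum]
          ring_nf
          rw [← Finset.sum_sub_distrib, ← Finset.sum_add_distrib]
          apply Finset.sum_congr rfl
          intro a _
          ring
        rw [expand]
        refine le_trans (Finset.abs_sum_le_sum_abs _ _) ?_
        apply Finset.sum_le_sum
        intro s _
        refine le_trans (abs_add_le _ _) (add_le_add ?_ ?_)
        · rw [abs_mul]
          apply mul_le_mul_of_nonneg_left _ (abs_nonneg _)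
          rw [abs_of_nonneg (Finset.sum_nonneg fun a _ =>
            mul_nonneg ((hπ s).1 a) ((hP' s a).1 s'))]
        · rw [abs_mul, abs_of_nonneg (hd.1 s)]
          apply mul_le_mul_of_nonneg_left _ (hd.1 s)
          refine le_trans (Finset.abs_sum_le_sum_abs _ _) ?_
          apply Finset.sum_le_sum
          intro a _
          rw [abs_mul, abs_of_nonneg ((hπ s).1 a)]
      calc ∑ s', |stepMarginal P' π μ' s' - stepMarginal P π μ s'|
          ≤ ∑ s', ∑ s, (|μ' s - μ s| * (∑ a, π s a * P' s a s')
              + μ s * ∑ a, π s a * |P' s a s' - P s a s'|) :=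
            Finset.sum_le_sum fun s' _ => pointwise s'
        _ = (∑ s, |μ' s - μ s| * ∑ s', ∑ a, π s a * P' s a s')
              + ∑ s, μ s * ∑ s', ∑ a, π s a * |P' s a s' - P s a s'| := by
            rw [Finset.sum_comm, ← Finset.sum_add_distrib]
            apply Finset.sum_congr rfl
            intro s _
            rw [Finset.sum_add_distrib, ← Finset.mul_sum, ← Finset.mul_sum]
        _ ≤ (∑ s, |μ' s - μ s| * 1) + ∑ s, μ s * (2 * δ₁) := by
            apply add_le_add
            · apply Finset.sum_le_sum
              intro s _
              apply mul_le_mul_of_nonneg_left _ (abs_nonneg _)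
              have : ∑ s', ∑ a, π s a * P' s a s' = 1 := by
                rw [Finset.sum_comm]
                calc ∑ a, ∑ s', π s a * P' s a s'
                    = ∑ a, π s a * ∑ s', P' s a s' := by simp_rw [Finset.mul_sum]
                  _ = ∑ a, π s a := by
                      apply Finset.sum_congr rfl
                      intro a _; rw [(hP' s a).2, mul_one]
                  _ = 1 := (hπ s).2
              rw [this]
            · apply Finset.sum_le_sum
              intro s _
              apply mul_le_mul_of_nonneg_left _ (hd.1 s)
              calc ∑ s', ∑ a, π s a * |P' s a s' - P s a s'|
                  = ∑ a, π s a * ∑ s', |P' s a s' - P s a s'| := by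
                    rw [Finset.sum_comm]; simp_rw [Finset.mul_sum]
                _ ≤ ∑ a, π s a * (2 * δ₁) := by
                    apply Finset.sum_le_sum
                    intro a _
                    apply mul_le_mul_of_nonneg_left _ ((hπ s).1 a)
                    have := hδ s a
                    linarith
                _ = 2 * δ₁ := by rw [← Finset.sum_mul, (hπ s).2, one_mul]
        _ = (∑ s, |μ' s - μ s|) + 2 * δ₁ := by
            simp only [mul_one]
            rw [← Finset.sum_mul, hd.2, one_mul]
    calc ∑ s, |marginal P' π ρ (t + 1) s - marginal P π ρ (t + 1) s|
        = ∑ s', |stepMarginal P' π μ' s' - stepMarginal P π μ s'| := rfl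
      _ ≤ (∑ s, |μ' s - μ s|) + 2 * δ₁ := key
      _ ≤ 2 * (t : ℝ) * δ₁ + 2 * δ₁ := by linarith
      _ = 2 * ((t : ℕ) + 1 : ℝ) * δ₁ := by ring
      _ = 2 * ((t + 1 : ℕ) : ℝ) * δ₁ := by push_cast; ring
end
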